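/- If G is a graph containing no K_3 and no K_{2,3} as a subgraph, then ex*(G, P_4) ≤ (3/2)·|V(G)|, i.e. 2·ex*(G, P_4) ≤ 3·|V(G)|. -/

import Mathlib

open SimpleGraph

/-- An edge coloring is proper on `H` if distinct edges of `H` sharing a vertex
receive different colors. -/
def IsProperEdgeColoring {V : Type*} (H : SimpleGraph V) (c : Sym2 V → ℕ) : Prop :=
  ∀ ⦃e₁ : Sym2 V⦄, e₁ ∈ H.edgeSet → ∀ ⦃e₂ : Sym2 V⦄, e₂ ∈ H.edgeSet →
    e₁ ≠ e₂ → (∃ v, v ∈ e₁ ∧ v ∈ e₂) → c e₁ ≠ c e₂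

/-- The graph `H`, edge colored by `c`, contains a rainbow copy of `F`:
there is an (injective) copy of `F` in `H` all of whose edges receive
pairwise distinct colors. -/
def HasRainbowCopy {V W : Type*} (H : SimpleGraph V) (c : Sym2 V → ℕ)
    (F : SimpleGraph W) : Prop :=
  ∃ f : W ↪ V, (∀ ⦃a b : W⦄, F.Adj a b → H.Adj (f a) (f b)) ∧
    ∀ ⦃a b a' b' : W⦄, F.Adj a b → F.Adj a' b' → s(a, b) ≠ s(a', b') →
      c s(f a, f b) ≠ c s(f a', f b')

/-- `H` admits a proper edge coloring with no rainbow copy of `F`. -/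
def RainbowFree {V W : Type*} (H : SimpleGraph V) (F : SimpleGraph W) : Prop :=
  ∃ c : Sym2 V → ℕ, IsProperEdgeColoring H c ∧ ¬ HasRainbowCopy H c F

/-- The rainbow extremal number `ex*(G,F)`: the maximum number of edges of a
subgraph `H` of `G` admitting a proper edge coloring with no rainbow copy of `F`. -/
noncomputable def rainbowExtremalNumber {V W : Type*} [Fintype V]
    (G : SimpleGraph V) (F : SimpleGraph W) : ℕ :=
  sSup {m | ∃ H : SimpleGraph V, H ≤ G ∧ RainbowFree H F ∧ m = H.edgeSet.ncard}

/-- The minimum degree of a subgraph, taken over its own vertex set. -/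
noncomputable def subMinDegree {V : Type*} {G : SimpleGraph V} (H : G.Subgraph) : ℕ :=
  sInf {d | ∃ v ∈ H.verts, d = (H.neighborSet v).ncard}

/-- `δ*(G,F)`: the maximum of the minimum degree over all subgraphs `H` of `G`
admitting a proper edge coloring with no rainbow copy of `F`. -/
noncomputable def rainbowMinDegree {V W : Type*} [Fintype V]
    (G : SimpleGraph V) (F : SimpleGraph W) : ℕ :=
  sSup {m | ∃ H : G.Subgraph, RainbowFree H.spanningCoe F ∧ m = subMinDegree H}

/-- The `n`-dimensional hypercube graph `Q_n`. -/
def cubeGraph (n : ℕ) : SimpleGraph (Fin n → Bool) where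
  Adj x y := {i | x i ≠ y i}.ncard = 1
  symm := by
    constructor
    intro x y h
    show {i | y i ≠ x i}.ncard = 1
    have hs : {i | y i ≠ x i} = {i | x i ≠ y i} := by ext i; simp [ne_comm]
    rw [hs]; exact h
  loopless := by
    constructor
    intro x h
    simp at h

/-- The star `K_{1,k}` with `k` edges. -/
def starGraph (k : ℕ) : SimpleGraph (Fin (k + 1)) where
  Adj i j := i ≠ j ∧ (i = 0 ∨ j = 0)
  symm := by constructor; intro i j h; exact ⟨h.1.symm, h.2.symm⟩
  loopless := by constructor; intro i h; exact h.1 rfl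

/-- `G` contains a copy of `F` as a subgraph. -/
def ContainsCopy {V W : Type*} (G : SimpleGraph V) (F : SimpleGraph W) : Prop :=
  ∃ f : W ↪ V, ∀ ⦃a b : W⦄, F.Adj a b → G.Adj (f a) (f b)

open Finset

/-!
Fix a proper edge colouring of `H ≤ G` without a rainbow `P₄`. Since `H` has no triangle, every
path `z - a - v - b - y` has five distinct vertices, so two of its non-consecutive edges share a
colour. Combined with the absence of `K_{2,3}`, a local analysis gives:

* (A) no vertex has four neighbours of degree at least `3`;
* (B) no vertex is adjacent to two distinct vertices of degree at least `4`.

For (A), orient every pair `u, u'` of such neighbours of `v` towards the one that repeats the colour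
of the edge from `v` to the other; in a tournament on four vertices some vertex has two
in-neighbours, and such a configuration is impossible.

Discharging then bounds the degree sum: a vertex of degree `d ≥ 4` has at least `d - 3` neighbours
of degree at most `2`, each of which has no other neighbour of degree `≥ 4` and can spare one unit
of charge. Hence `2 |E(H)| = ∑ deg ≤ 3 |V|`.
-/

section Copies

variable {V : Type*} {G H : SimpleGraph V}

theorem ContainsCopy.mono {W : Type*} {F : SimpleGraph W} (hle : H ≤ G) :
    ContainsCopy H F → ContainsCopy G F
  | ⟨f, hf⟩ => ⟨f, fun _ _ h ↦ hle (hf h)⟩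

theorem containsCopy_top_fin_three {x y z : V} (hxy : H.Adj x y) (hyz : H.Adj y z)
    (hxz : H.Adj x z) : ContainsCopy H (⊤ : SimpleGraph (Fin 3)) := by
  refine ⟨⟨![x, y, z], ?_⟩, fun i j hij ↦ ?_⟩
  · rw [← List.nodup_ofFn]
    simp [hxy.ne, hyz.ne, hxz.ne]
  · fin_cases i <;> fin_cases j <;> simp_all [adj_comm]

theorem containsCopy_completeBipartiteGraph_of_adj {u₁ u₂ w₁ w₂ w₃ : V} (hu : u₁ ≠ u₂)
    (hw₁₂ : w₁ ≠ w₂) (hw₁₃ : w₁ ≠ w₃) (hw₂₃ : w₂ ≠ w₃)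
    (h₁₁ : H.Adj u₁ w₁) (h₁₂ : H.Adj u₁ w₂) (h₁₃ : H.Adj u₁ w₃)
    (h₂₁ : H.Adj u₂ w₁) (h₂₂ : H.Adj u₂ w₂) (h₂₃ : H.Adj u₂ w₃) :
    ContainsCopy H (completeBipartiteGraph (Fin 2) (Fin 3)) := by
  refine ⟨⟨Sum.elim ![u₁, u₂] ![w₁, w₂, w₃], ?_⟩, ?_⟩
  · refine Function.Injective.sumElim ?_ ?_ fun i j ↦ ?_
    · rw [← List.nodup_ofFn]
      simp [hu]
    · rw [← List.nodup_ofFn]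
      simp [hw₁₂, hw₁₃, hw₂₃]
    · fin_cases i <;> fin_cases j <;> simp [h₁₁.ne, h₁₂.ne, h₁₃.ne, h₂₁.ne, h₂₂.ne, h₂₃.ne]
  · rintro (i | i) (j | j) h
    · simp at h
    · fin_cases i <;> fin_cases j <;> simp [*]
    · fin_cases i <;> fin_cases j <;> simp [*, adj_comm]
    · simp at h

end Copies

theorem exists_two_rel_of_four_le_card {α : Type*} {R : α → α → Prop} {s : Finset α}
    (hs : 4 ≤ #s) (hR : ∀ a ∈ s, ∀ b ∈ s, a ≠ b → R a b ∨ R b a) :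
    ∃ r ∈ s, ∃ p ∈ s, ∃ q ∈ s, p ≠ q ∧ p ≠ r ∧ q ≠ r ∧ R p r ∧ R q r := by
  classical
  obtain ⟨a, ha⟩ : s.Nonempty := card_pos.1 (by omega)
  have hsplit := card_filter_add_card_filter_not (s := s.erase a) (fun x ↦ R x a)
  rw [card_erase_of_mem ha] at hsplit
  by_cases hin : 1 < #{x ∈ s.erase a | R x a}
  · obtain ⟨p, hp, q, hq, hpq⟩ := one_lt_card.1 hin
    simp only [mem_filter, mem_erase] at hp hq
    exact ⟨a, ha, p, hp.1.2, q, hq.1.2, hpq, hp.1.1, hq.1.1, hp.2, hq.2⟩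
  · obtain ⟨x, hx, y, hy, hxy⟩ := one_lt_card.1 (show 1 < #{x ∈ s.erase a | ¬ R x a} by omega)
    simp only [mem_filter, mem_erase] at hx hy
    have hax : R a x := (hR a ha x hx.1.2 (Ne.symm hx.1.1)).resolve_right hx.2
    have hay : R a y := (hR a ha y hy.1.2 (Ne.symm hy.1.1)).resolve_right hy.2
    rcases hR x hx.1.2 y hy.1.2 hxy with h | h
    · exact ⟨y, hy.1.2, a, ha, x, hx.1.2, Ne.symm hx.1.1, Ne.symm hy.1.1, hxy, hay, h⟩
    · exact ⟨x, hx.1.2, a, ha, y, hy.1.2, Ne.symm hy.1.1, Ne.symm hx.1.1, Ne.symm hxy, hax, h⟩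

namespace SimpleGraph

variable {V : Type*} {H : SimpleGraph V} [Fintype V] [DecidableRel H.Adj]

theorem exists_adj_notMem_of_card_lt_degree {s : Finset V} {u : V} (hs : #s < H.degree u) :
    ∃ x, H.Adj u x ∧ x ∉ s := by
  by_contra! h
  refine hs.not_ge ?_
  rw [← card_neighborFinset_eq_degree]
  exact card_le_card fun x hx ↦ h x ((mem_neighborFinset _ _ _).1 hx)

theorem exists_adj_adj_ne_of_three_le_degree {u : V} (hd : 3 ≤ H.degree u) (v : V) :
    ∃ x y, H.Adj u x ∧ H.Adj u y ∧ x ≠ v ∧ y ≠ v ∧ x ≠ y := by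
  classical
  obtain ⟨x, hx, hxv⟩ :=
    exists_adj_notMem_of_card_lt_degree (H := H) (u := u) (s := {v}) (by simp; omega)
  obtain ⟨y, hy, hyvx⟩ := exists_adj_notMem_of_card_lt_degree (H := H) (u := u) (s := {v, x})
    (by have := card_le_two (a := v) (b := x); omega)
  simp only [mem_singleton, mem_insert, not_or] at hxv hyvx
  exact ⟨x, y, hx, hy, hxv, hyvx.1, Ne.symm hyvx.2⟩

theorem two_mul_card_edgeFinset_le
    (hhigh : ∀ v, 4 ≤ H.degree v → #{u ∈ H.neighborFinset v | 3 ≤ H.degree u} ≤ 3)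
    (hlow : ∀ u, H.degree u ≤ 2 → #{w ∈ H.neighborFinset u | 4 ≤ H.degree w} ≤ 1) :
    2 * #H.edgeFinset ≤ 3 * Fintype.card V := by
  classical
  -- each edge from a vertex of degree `≥ 4` to one of degree `≤ 2` moves one unit of charge
  let r : V → V → Prop := fun v u ↦ 4 ≤ H.degree v ∧ H.Adj v u ∧ H.degree u ≤ 2
  have htransfer : ∑ v, #{u | r v u} = ∑ u, #{v | r v u} :=
    sum_card_bipartiteAbove_eq_sum_card_bipartiteBelow r
  have hcharge : ∀ v, H.degree v + #{w | r w v} ≤ 3 + #{u | r v u} := by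
    intro v
    rcases le_or_gt 4 (H.degree v) with hv | hv
    · have hsplit := card_filter_add_card_filter_not (s := H.neighborFinset v)
        (fun u ↦ H.degree u ≤ 2)
      have hout : #{u | r v u} = #{u ∈ H.neighborFinset v | H.degree u ≤ 2} := by
        congr 1; ext u; simp [r, hv]
      have hin : #{w | r w v} = 0 := by
        rw [card_eq_zero, filter_eq_empty_iff]; intro w _ h; omega
      have hhigh' : #{u ∈ H.neighborFinset v | ¬ H.degree u ≤ 2} ≤ 3 := by
        simpa only [not_le, Nat.lt_iff_add_one_le] using hhigh v hv
      rw [card_neighborFinset_eq_degree] at hsplit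
      omega
    rcases le_or_gt (H.degree v) 2 with hv' | hv'
    · have hin : #{w | r w v} = #{w ∈ H.neighborFinset v | 4 ≤ H.degree w} := by
        congr 1; ext w; simp [r, hv', adj_comm, and_comm]
      have := hlow v hv'
      omega
    · have hin : #{w | r w v} = 0 := by
        rw [card_eq_zero, filter_eq_empty_iff]; intro w _ h; omega
      omega
  have hsum := sum_le_sum fun v (_ : v ∈ univ) ↦ hcharge v
  rw [sum_add_distrib, sum_add_distrib, ← htransfer, sum_degrees_eq_twice_card_edges,
    sum_const, card_univ, smul_eq_mul] at hsum
  omega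

end SimpleGraph

section Coloring

variable {V : Type*} {H : SimpleGraph V} {c : Sym2 V → ℕ}

theorem IsProperEdgeColoring.color_ne (hc : IsProperEdgeColoring H c) {v x y : V}
    (hx : H.Adj v x) (hy : H.Adj v y) (hxy : x ≠ y) : c s(v, x) ≠ c s(v, y) :=
  hc hx hy (fun h ↦ hxy (Sym2.congr_right.1 h)) ⟨v, Sym2.mem_mk_left v x, Sym2.mem_mk_left v y⟩

theorem IsProperEdgeColoring.exists_adj_adj_color_ne [Fintype V] [DecidableRel H.Adj]
    (hc : IsProperEdgeColoring H c) {v : V} (hd : 4 ≤ H.degree v) (u : V) (k : ℕ) :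
    ∃ x y, H.Adj v x ∧ H.Adj v y ∧ x ≠ u ∧ y ≠ u ∧ x ≠ y ∧ c s(v, x) ≠ k ∧ c s(v, y) ≠ k := by
  classical
  obtain ⟨x₀, hx₀⟩ : ∃ x₀, ∀ x, H.Adj v x → c s(v, x) = k → x = x₀ := by
    by_cases h : ∃ x, H.Adj v x ∧ c s(v, x) = k
    · obtain ⟨x₀, h₀, hk₀⟩ := h
      exact ⟨x₀, fun x hx hk ↦ by_contra fun hne ↦ hc.color_ne hx h₀ hne (hk.trans hk₀.symm)⟩
    · exact ⟨u, fun x hx hk ↦ (h ⟨x, hx, hk⟩).elim⟩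
  obtain ⟨x, hx, hxs⟩ := exists_adj_notMem_of_card_lt_degree (H := H) (u := v) (s := {u, x₀})
    (by have := card_le_two (a := u) (b := x₀); omega)
  obtain ⟨y, hy, hys⟩ := exists_adj_notMem_of_card_lt_degree (H := H) (u := v)
    (s := {u, x₀, x}) (by have := card_le_three (a := u) (b := x₀) (c := x); omega)
  simp only [mem_insert, mem_singleton, not_or] at hxs hys
  exact ⟨x, y, hx, hy, hxs.1, hys.1, Ne.symm hys.2.2, fun h ↦ hxs.2 (hx₀ x hx h),
    fun h ↦ hys.2.1 (hx₀ y hy h)⟩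

theorem hasRainbowCopy_pathGraph {n : ℕ} (p : Fin (n + 1) → V) (hp : Function.Injective p)
    (hadj : ∀ i : Fin n, H.Adj (p i.castSucc) (p i.succ))
    (hcol : Function.Injective fun i : Fin n ↦ c s(p i.castSucc, p i.succ)) :
    HasRainbowCopy H c (pathGraph (n + 1)) := by
  have hedge : ∀ ⦃a b : Fin (n + 1)⦄, (pathGraph (n + 1)).Adj a b →
      ∃ i : Fin n, s(a, b) = s(i.castSucc, i.succ) := by
    intro a b h
    rcases pathGraph_adj.1 h with h | h
    · exact ⟨⟨a, by omega⟩, by ext; simp [h]⟩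
    · exact ⟨⟨b, by omega⟩, by rw [Sym2.eq_swap]; ext; simp [h]⟩
  have hmap : ∀ ⦃a b : Fin (n + 1)⦄ (i : Fin n), s(a, b) = s(i.castSucc, i.succ) →
      s(p a, p b) = s(p i.castSucc, p i.succ) := fun a b i h ↦ by
    simpa using congrArg (Sym2.map p) h
  refine ⟨⟨p, hp⟩, fun a b h ↦ ?_, fun a b a' b' h h' hne ↦ ?_⟩
  · obtain ⟨i, hi⟩ := hedge h
    rw [← mem_edgeSet, Function.Embedding.coeFn_mk, hmap i hi]
    exact hadj i
  · obtain ⟨i, hi⟩ := hedge h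
    obtain ⟨i', hi'⟩ := hedge h'
    simp only [Function.Embedding.coeFn_mk, hmap i hi, hmap i' hi']
    exact fun heq ↦ hne (by rw [hi, hi', hcol heq])

-- `P₄` has four edges, hence five vertices.
structure IsRainbowP4FreeColoring (H : SimpleGraph V) (c : Sym2 V → ℕ) : Prop where
  proper : IsProperEdgeColoring H c
  not_rainbow : ¬ HasRainbowCopy H c (pathGraph 5)

def RepeatsColor (H : SimpleGraph V) (c : Sym2 V → ℕ) (v p r : V) : Prop :=
  ∃ x, H.Adj r x ∧ x ≠ v ∧ c s(r, x) = c s(v, p)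

namespace IsRainbowP4FreeColoring

-- The path `z - a - v - b - y` is not rainbow: properness separates consecutive edges and `hcy`
-- separates `av` from `by`, so `az` must share its colour with `vb` or `by`.
theorem color_eq_or_eq_of_path (hc : IsRainbowP4FreeColoring H c)
    (hT : ¬ ContainsCopy H (⊤ : SimpleGraph (Fin 3))) {v a b y z : V}
    (ha : H.Adj v a) (hb : H.Adj v b) (hab : a ≠ b) (hy : H.Adj b y) (hyv : y ≠ v)
    (hcy : c s(b, y) ≠ c s(v, a)) (hz : H.Adj a z) (hzv : z ≠ v) (hzy : z ≠ y) :
    c s(a, z) = c s(v, b) ∨ c s(a, z) = c s(b, y) := by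
  by_contra! h
  have hzb : z ≠ b := by rintro rfl; exact hT (containsCopy_top_fin_three ha hz hb)
  have hya : y ≠ a := by rintro rfl; exact hT (containsCopy_top_fin_three ha hy.symm hb)
  refine hc.not_rainbow (hasRainbowCopy_pathGraph ![z, a, v, b, y] ?_ ?_ ?_)
  · rw [← List.nodup_ofFn]
    simp [hz.ne.symm, hzv, hzb, hzy, ha.ne.symm, hab, hya.symm, hb.ne, hyv.symm, hy.ne]
  · intro i
    fin_cases i <;> simp [hz.symm, ha.symm, hb, hy]
  · rw [← List.nodup_ofFn]
    simp only [Matrix.cons_val_succ, List.ofFn_succ, Fin.isValue, Fin.castSucc_zero,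
      Matrix.cons_val_zero, Fin.castSucc_succ, Nat.reduceAdd, Matrix.cons_val_fin_one,
      List.ofFn_zero, List.nodup_cons, List.mem_cons, List.not_mem_nil, or_false, not_or,
      not_false_eq_true, List.nodup_nil, and_self, and_true]
    refine ⟨⟨?_, ?_, ?_⟩, ⟨?_, ?_⟩, ?_⟩ <;> rw [Sym2.eq_swap]
    exacts [hc.proper.color_ne hz ha.symm hzv, h.1, h.2, hc.proper.color_ne ha hb hab, hcy.symm,
      hc.proper.color_ne hb.symm hy hyv.symm]

theorem color_reappears (hc : IsRainbowP4FreeColoring H c)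
    (hT : ¬ ContainsCopy H (⊤ : SimpleGraph (Fin 3)))
    (hK : ¬ ContainsCopy H (completeBipartiteGraph (Fin 2) (Fin 3))) {v u u' x₁ x₂ y₁ y₂ : V}
    (hu : H.Adj v u) (hu' : H.Adj v u') (huu' : u ≠ u')
    (hx₁ : H.Adj u x₁) (hx₂ : H.Adj u x₂) (hx₁v : x₁ ≠ v) (hx₂v : x₂ ≠ v) (hx : x₁ ≠ x₂)
    (hy₁ : H.Adj u' y₁) (hy₂ : H.Adj u' y₂) (hy₁v : y₁ ≠ v) (hy₂v : y₂ ≠ v) (hy : y₁ ≠ y₂) :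
    c s(u, x₁) = c s(v, u') ∨ c s(u, x₂) = c s(v, u') ∨
      c s(u', y₁) = c s(v, u) ∨ c s(u', y₂) = c s(v, u) := by
  by_contra! h
  obtain ⟨hcx₁, hcx₂, hcy₁, hcy₂⟩ := h
  obtain ⟨x, hux, hxv, hu'x, hcx⟩ :
      ∃ x, H.Adj u x ∧ x ≠ v ∧ ¬ H.Adj u' x ∧ c s(u, x) ≠ c s(v, u') := by
    have : ¬ (H.Adj u' x₁ ∧ H.Adj u' x₂) := fun ⟨h₁, h₂⟩ ↦ hK <|
      containsCopy_completeBipartiteGraph_of_adj huu' hx₁v.symm hx₂v.symm hx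
        hu.symm hx₁ hx₂ hu'.symm h₁ h₂
    rcases not_and_or.1 this with h | h
    exacts [⟨x₁, hx₁, hx₁v, h, hcx₁⟩, ⟨x₂, hx₂, hx₂v, h, hcx₂⟩]
  have key : ∀ y, H.Adj u' y → y ≠ v → c s(u', y) ≠ c s(v, u) → c s(u, x) = c s(u', y) :=
    fun y hy hyv hcy ↦ (hc.color_eq_or_eq_of_path hT hu hu' huu' hy hyv hcy hux hxv
      (by rintro rfl; exact hu'x hy)).resolve_left hcx
  exact hc.proper.color_ne hy₁ hy₂ hy
    ((key y₁ hy₁ hy₁v hcy₁).symm.trans (key y₂ hy₂ hy₂v hcy₂))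

theorem false_of_common_neighbor (hc : IsRainbowP4FreeColoring H c)
    (hT : ¬ ContainsCopy H (⊤ : SimpleGraph (Fin 3)))
    (hK : ¬ ContainsCopy H (completeBipartiteGraph (Fin 2) (Fin 3))) {v w₁ w₂ w₃ w₄ z x : V}
    (hw₁ : H.Adj v w₁) (hw₂ : H.Adj v w₂) (hw₃ : H.Adj v w₃) (hw₄ : H.Adj v w₄)
    (h₁₂ : w₁ ≠ w₂) (h₁₃ : w₁ ≠ w₃) (h₂₃ : w₂ ≠ w₃) (h₂₄ : w₂ ≠ w₄) (h₃₄ : w₃ ≠ w₄)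
    (hz₁ : H.Adj w₁ z) (hz₂ : H.Adj w₂ z) (hzv : z ≠ v) (hcz : c s(w₁, z) = c s(v, w₄))
    (hx : H.Adj w₃ x) (hxv : x ≠ v) (hcx : c s(w₃, x) = c s(v, w₂)) : False := by
  have hxz : x ≠ z := by
    rintro rfl
    exact hK (containsCopy_completeBipartiteGraph_of_adj hxv.symm h₁₂ h₁₃ h₂₃
      hw₁ hw₂ hw₃ hz₁.symm hz₂.symm hx.symm)
  have hcz' : c s(w₁, z) ≠ c s(v, w₃) := by
    rw [hcz]; exact (hc.proper.color_ne hw₃ hw₄ h₃₄).symm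
  rcases hc.color_eq_or_eq_of_path hT hw₃ hw₁ h₁₃.symm hz₁ hzv hcz' hx hxv hxz with h | h
  · exact hc.proper.color_ne hw₁ hw₂ h₁₂ (h.symm.trans hcx)
  · exact hc.proper.color_ne hw₂ hw₄ h₂₄ (hcx.symm.trans (h.trans hcz))

variable [Fintype V] [DecidableRel H.Adj]

theorem repeatsColor_or_repeatsColor (hc : IsRainbowP4FreeColoring H c)
    (hT : ¬ ContainsCopy H (⊤ : SimpleGraph (Fin 3)))
    (hK : ¬ ContainsCopy H (completeBipartiteGraph (Fin 2) (Fin 3))) {v u u' : V}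
    (hu : H.Adj v u) (hu' : H.Adj v u') (huu' : u ≠ u')
    (hdu : 3 ≤ H.degree u) (hdu' : 3 ≤ H.degree u') :
    RepeatsColor H c v u u' ∨ RepeatsColor H c v u' u := by
  obtain ⟨x₁, x₂, hx₁, hx₂, hx₁v, hx₂v, hx⟩ := exists_adj_adj_ne_of_three_le_degree hdu v
  obtain ⟨y₁, y₂, hy₁, hy₂, hy₁v, hy₂v, hy⟩ := exists_adj_adj_ne_of_three_le_degree hdu' v
  rcases hc.color_reappears hT hK hu hu' huu' hx₁ hx₂ hx₁v hx₂v hx hy₁ hy₂ hy₁v hy₂v hy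
    with h | h | h | h
  exacts [Or.inr ⟨x₁, hx₁, hx₁v, h⟩, Or.inr ⟨x₂, hx₂, hx₂v, h⟩, Or.inl ⟨y₁, hy₁, hy₁v, h⟩,
    Or.inl ⟨y₂, hy₂, hy₂v, h⟩]

theorem false_of_adj_of_four_le_degree (hc : IsRainbowP4FreeColoring H c)
    (hT : ¬ ContainsCopy H (⊤ : SimpleGraph (Fin 3)))
    (hK : ¬ ContainsCopy H (completeBipartiteGraph (Fin 2) (Fin 3))) {u v w : V}
    (hv : H.Adj u v) (hw : H.Adj u w) (hvw : v ≠ w) (hdv : 4 ≤ H.degree v)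
    (hdw : 4 ≤ H.degree w) : False := by
  obtain ⟨x₁, x₂, hx₁, hx₂, hx₁u, hx₂u, hx, hcx₁, hcx₂⟩ :=
    hc.proper.exists_adj_adj_color_ne hdv u (c s(u, w))
  obtain ⟨y₁, y₂, hy₁, hy₂, hy₁u, hy₂u, hy, hcy₁, hcy₂⟩ :=
    hc.proper.exists_adj_adj_color_ne hdw u (c s(u, v))
  rcases hc.color_reappears hT hK hv hw hvw hx₁ hx₂ hx₁u hx₂u hx hy₁ hy₂ hy₁u hy₂u hy
    with h | h | h | h
  exacts [hcx₁ h, hcx₂ h, hcy₁ h, hcy₂ h]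

theorem repeatsColor_of_repeatsColor_of_repeatsColor (hc : IsRainbowP4FreeColoring H c)
    (hT : ¬ ContainsCopy H (⊤ : SimpleGraph (Fin 3)))
    (hK : ¬ ContainsCopy H (completeBipartiteGraph (Fin 2) (Fin 3))) {v w₁ w₂ w₃ w₄ : V}
    (hw₁ : H.Adj v w₁) (hw₂ : H.Adj v w₂) (hw₃ : H.Adj v w₃) (hw₄ : H.Adj v w₄)
    (h₁₂ : w₁ ≠ w₂) (h₁₄ : w₁ ≠ w₄) (h₂₄ : w₂ ≠ w₄) (h₃₄ : w₃ ≠ w₄) (hd₄ : 3 ≤ H.degree w₄)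
    (r₁₃ : RepeatsColor H c v w₁ w₃) (r₂₃ : RepeatsColor H c v w₂ w₃) :
    RepeatsColor H c v w₃ w₄ := by
  classical
  obtain ⟨x₁, hx₁, hx₁v, hcx₁⟩ := r₁₃
  obtain ⟨x₂, hx₂, hx₂v, hcx₂⟩ := r₂₃
  have hx : x₁ ≠ x₂ := by
    rintro rfl
    exact hc.proper.color_ne hw₁ hw₂ h₁₂ (hcx₁.symm.trans hcx₂)
  obtain ⟨y, hy, hyv, hyx₁, hyx₂⟩ : ∃ y, H.Adj w₄ y ∧ y ≠ v ∧ y ≠ x₁ ∧ y ≠ x₂ := by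
    have : ¬ (H.Adj w₄ x₁ ∧ H.Adj w₄ x₂) := fun ⟨h₁, h₂⟩ ↦ hK <|
      containsCopy_completeBipartiteGraph_of_adj h₃₄ hx₁v.symm hx₂v.symm hx
        hw₃.symm hx₁ hx₂ hw₄.symm h₁ h₂
    rcases not_and_or.1 this with h | h
    · obtain ⟨y, hy, hys⟩ := exists_adj_notMem_of_card_lt_degree (H := H) (u := w₄)
        (s := {v, x₂}) (by have := card_le_two (a := v) (b := x₂); omega)
      simp only [mem_insert, mem_singleton, not_or] at hys
      exact ⟨y, hy, hys.1, by rintro rfl; exact h hy, hys.2⟩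
    · obtain ⟨y, hy, hys⟩ := exists_adj_notMem_of_card_lt_degree (H := H) (u := w₄)
        (s := {v, x₁}) (by have := card_le_two (a := v) (b := x₁); omega)
      simp only [mem_insert, mem_singleton, not_or] at hys
      exact ⟨y, hy, hys.1, hys.2, by rintro rfl; exact h hy⟩
  have hc₁ : c s(w₃, x₁) ≠ c s(v, w₄) := by rw [hcx₁]; exact hc.proper.color_ne hw₁ hw₄ h₁₄
  have hc₂ : c s(w₃, x₂) ≠ c s(v, w₄) := by rw [hcx₂]; exact hc.proper.color_ne hw₂ hw₄ h₂₄
  refine ⟨y, hy, hyv, ?_⟩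
  rcases hc.color_eq_or_eq_of_path hT hw₄ hw₃ h₃₄.symm hx₁ hx₁v hc₁ hy hyv hyx₁ with h₁ | h₁
  · exact h₁
  rcases hc.color_eq_or_eq_of_path hT hw₄ hw₃ h₃₄.symm hx₂ hx₂v hc₂ hy hyv hyx₂ with h₂ | h₂
  · exact h₂
  exact absurd (h₁.symm.trans h₂) (hc.proper.color_ne hx₁ hx₂ hx)

theorem repeatsColor_and_exists_of_not_adj (hc : IsRainbowP4FreeColoring H c)
    (hT : ¬ ContainsCopy H (⊤ : SimpleGraph (Fin 3))) {v a b y : V}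
    (ha : H.Adj v a) (hb : H.Adj v b) (hab : a ≠ b) (hy : H.Adj b y) (hyv : y ≠ v)
    (hcy : c s(b, y) ≠ c s(v, a)) (hay : ¬ H.Adj a y) (hd : 3 ≤ H.degree a) :
    RepeatsColor H c v b a ∧ ∃ z, H.Adj a z ∧ z ≠ v ∧ c s(a, z) = c s(b, y) := by
  obtain ⟨z₁, z₂, hz₁, hz₂, hz₁v, hz₂v, hz⟩ := exists_adj_adj_ne_of_three_le_degree hd v
  have hne := hc.proper.color_ne hz₁ hz₂ hz
  rcases hc.color_eq_or_eq_of_path hT ha hb hab hy hyv hcy hz₁ hz₁v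
      (by rintro rfl; exact hay hz₁) with h₁ | h₁ <;>
    rcases hc.color_eq_or_eq_of_path hT ha hb hab hy hyv hcy hz₂ hz₂v
      (by rintro rfl; exact hay hz₂) with h₂ | h₂
  · exact absurd (h₁.trans h₂.symm) hne
  · exact ⟨⟨z₁, hz₁, hz₁v, h₁⟩, z₂, hz₂, hz₂v, h₂⟩
  · exact ⟨⟨z₂, hz₂, hz₂v, h₂⟩, z₁, hz₁, hz₁v, h₁⟩
  · exact absurd (h₁.trans h₂.symm) hne

theorem false_of_repeatsColor (hc : IsRainbowP4FreeColoring H c)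
    (hT : ¬ ContainsCopy H (⊤ : SimpleGraph (Fin 3)))
    (hK : ¬ ContainsCopy H (completeBipartiteGraph (Fin 2) (Fin 3))) {v w₁ w₂ w₃ w₄ : V}
    (hw₁ : H.Adj v w₁) (hw₂ : H.Adj v w₂) (hw₃ : H.Adj v w₃) (hw₄ : H.Adj v w₄)
    (h₁₂ : w₁ ≠ w₂) (h₁₃ : w₁ ≠ w₃) (h₁₄ : w₁ ≠ w₄) (h₂₃ : w₂ ≠ w₃) (h₂₄ : w₂ ≠ w₄)
    (h₃₄ : w₃ ≠ w₄) (hd₂ : 3 ≤ H.degree w₂)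
    (r₁₃ : RepeatsColor H c v w₁ w₃) (r₂₃ : RepeatsColor H c v w₂ w₃)
    (r₄₁ : RepeatsColor H c v w₄ w₁) (r₃₁ : RepeatsColor H c v w₃ w₁)
    (r₃₄ : RepeatsColor H c v w₃ w₄) : False := by
  obtain ⟨x₁, hx₁, hx₁v, hcx₁⟩ := r₁₃
  obtain ⟨x₂, hx₂, hx₂v, hcx₂⟩ := r₂₃
  obtain ⟨zp, hzp, hzpv, hczp⟩ := r₄₁
  obtain ⟨zg, hzg, hzgv, hczg⟩ := r₃₁
  obtain ⟨y, hy, hyv, hcy⟩ := r₃₄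
  have s₁₂ := hc.proper.color_ne hw₁ hw₂ h₁₂
  have s₁₃ := hc.proper.color_ne hw₁ hw₃ h₁₃
  have s₁₄ := hc.proper.color_ne hw₁ hw₄ h₁₄
  have s₂₃ := hc.proper.color_ne hw₂ hw₃ h₂₃
  have s₂₄ := hc.proper.color_ne hw₂ hw₄ h₂₄
  have s₃₄ := hc.proper.color_ne hw₃ hw₄ h₃₄
  obtain ⟨t, ht, htv, hty⟩ : ∃ t, H.Adj w₂ t ∧ t ≠ v ∧ t ≠ y := by
    obtain ⟨t₁, t₂, ht₁, ht₂, ht₁v, ht₂v, ht⟩ := exists_adj_adj_ne_of_three_le_degree hd₂ v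
    by_cases h : t₁ = y
    · exact ⟨t₂, ht₂, ht₂v, h ▸ ht.symm⟩
    · exact ⟨t₁, ht₁, ht₁v, h⟩
  have e₄ := hc.color_eq_or_eq_of_path hT hw₂ hw₄ h₂₄ hy hyv (by rw [hcy]; exact s₂₃.symm)
    ht htv hty
  by_cases hp : t = zp
  · subst hp
    exact hc.false_of_common_neighbor hT hK hw₁ hw₂ hw₃ hw₄ h₁₂ h₁₃ h₂₃ h₂₄ h₃₄ hzp ht hzpv
      hczp hx₂ hx₂v hcx₂
  by_cases hg : t = zg
  · subst hg
    have hne := hc.proper.color_ne hzg.symm ht.symm h₁₂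
    rw [Sym2.eq_swap, Sym2.eq_swap (a := t)] at hne
    have hc₄ : c s(w₂, t) = c s(v, w₄) :=
      e₄.resolve_right fun h ↦ hne (hczg.trans (hcy.symm.trans h.symm))
    exact hc.false_of_common_neighbor hT hK hw₂ hw₁ hw₃ hw₄ h₁₂.symm h₂₃ h₁₃ h₁₄ h₃₄ ht hzg
      hzgv hc₄ hx₁ hx₁v hcx₁
  have e₁ := hc.color_eq_or_eq_of_path hT hw₂ hw₁ h₁₂.symm hzp hzpv (by rw [hczp]; exact s₂₄.symm)
    ht htv hp
  have e₃ := hc.color_eq_or_eq_of_path hT hw₂ hw₁ h₁₂.symm hzg hzgv (by rw [hczg]; exact s₂₃.symm)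
    ht htv hg
  rw [hcy] at e₄
  rw [hczp] at e₁
  rw [hczg] at e₃
  -- with `αᵢ = c s(v, wᵢ)`, the colour of `w₂t` would lie in `{α₄, α₃} ∩ {α₁, α₄} ∩ {α₁, α₃} = ∅`
  omega

theorem false_of_repeatsColor_of_repeatsColor (hc : IsRainbowP4FreeColoring H c)
    (hT : ¬ ContainsCopy H (⊤ : SimpleGraph (Fin 3)))
    (hK : ¬ ContainsCopy H (completeBipartiteGraph (Fin 2) (Fin 3))) {v w₁ w₂ w₃ w₄ : V}
    (hw₁ : H.Adj v w₁) (hw₂ : H.Adj v w₂) (hw₃ : H.Adj v w₃) (hw₄ : H.Adj v w₄)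
    (h₁₂ : w₁ ≠ w₂) (h₁₃ : w₁ ≠ w₃) (h₁₄ : w₁ ≠ w₄) (h₂₃ : w₂ ≠ w₃) (h₂₄ : w₂ ≠ w₄)
    (h₃₄ : w₃ ≠ w₄) (hd₁ : 3 ≤ H.degree w₁) (hd₂ : 3 ≤ H.degree w₂) (hd₄ : 3 ≤ H.degree w₄)
    (r₁₃ : RepeatsColor H c v w₁ w₃) (r₂₃ : RepeatsColor H c v w₂ w₃) : False := by
  obtain ⟨y, hy, hyv, hcy⟩ := hc.repeatsColor_of_repeatsColor_of_repeatsColor hT hK hw₁ hw₂ hw₃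
    hw₄ h₁₂ h₁₄ h₂₄ h₃₄ hd₄ r₁₃ r₂₃
  have : ¬ (H.Adj w₁ y ∧ H.Adj w₂ y) := fun ⟨h₁, h₂⟩ ↦ hK <|
    containsCopy_completeBipartiteGraph_of_adj hyv.symm h₁₂ h₁₄ h₂₄ hw₁ hw₂ hw₄
      h₁.symm h₂.symm hy.symm
  rcases not_and_or.1 this with hy₁ | hy₂
  · obtain ⟨r₄₁, z, hz, hzv, hcz⟩ := hc.repeatsColor_and_exists_of_not_adj hT hw₁ hw₄ h₁₄ hy hyv
      (by rw [hcy]; exact (hc.proper.color_ne hw₁ hw₃ h₁₃).symm) hy₁ hd₁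
    exact hc.false_of_repeatsColor hT hK hw₁ hw₂ hw₃ hw₄ h₁₂ h₁₃ h₁₄ h₂₃ h₂₄ h₃₄ hd₂ r₁₃ r₂₃
      r₄₁ ⟨z, hz, hzv, hcz.trans hcy⟩ ⟨y, hy, hyv, hcy⟩
  · obtain ⟨r₄₂, z, hz, hzv, hcz⟩ := hc.repeatsColor_and_exists_of_not_adj hT hw₂ hw₄ h₂₄ hy hyv
      (by rw [hcy]; exact (hc.proper.color_ne hw₂ hw₃ h₂₃).symm) hy₂ hd₂
    exact hc.false_of_repeatsColor hT hK hw₂ hw₁ hw₃ hw₄ h₁₂.symm h₂₃ h₂₄ h₁₃ h₁₄ h₃₄ hd₁ r₂₃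
      r₁₃ r₄₂ ⟨z, hz, hzv, hcz.trans hcy⟩ ⟨y, hy, hyv, hcy⟩

theorem card_filter_three_le_degree_le (hc : IsRainbowP4FreeColoring H c)
    (hT : ¬ ContainsCopy H (⊤ : SimpleGraph (Fin 3)))
    (hK : ¬ ContainsCopy H (completeBipartiteGraph (Fin 2) (Fin 3))) (v : V) :
    #{u ∈ H.neighborFinset v | 3 ≤ H.degree u} ≤ 3 := by
  classical
  by_contra! h4
  set N := {u ∈ H.neighborFinset v | 3 ≤ H.degree u}
  have hN : ∀ {u}, u ∈ N → H.Adj v u ∧ 3 ≤ H.degree u := by simp [N]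
  obtain ⟨r, hr, p, hp, q, hq, hpq, hpr, hqr, rpr, rqr⟩ :=
    exists_two_rel_of_four_le_card (R := RepeatsColor H c v) h4 fun a ha b hb hab ↦
      hc.repeatsColor_or_repeatsColor hT hK (hN ha).1 (hN hb).1 hab (hN ha).2 (hN hb).2
  obtain ⟨t, ht, htpqr⟩ := exists_mem_notMem_of_card_lt_card (s := {p, q, r}) (t := N)
    (by have := card_le_three (a := p) (b := q) (c := r); omega)
  simp only [mem_insert, mem_singleton, not_or] at htpqr
  exact hc.false_of_repeatsColor_of_repeatsColor hT hK (hN hp).1 (hN hq).1 (hN hr).1 (hN ht).1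
    hpq hpr (Ne.symm htpqr.1) hqr (Ne.symm htpqr.2.1) (Ne.symm htpqr.2.2) (hN hp).2 (hN hq).2
    (hN ht).2 rpr rqr

end IsRainbowP4FreeColoring

end Coloring

theorem rainbowExtremalNumber_le {V W : Type*} [Fintype V] {G : SimpleGraph V}
    {F : SimpleGraph W} {m : ℕ} (h : ∀ H ≤ G, RainbowFree H F → H.edgeSet.ncard ≤ m) :
    rainbowExtremalNumber G F ≤ m :=
  csSup_le' fun _ ⟨H, hle, hH, hm⟩ ↦ hm ▸ h H hle hH

theorem two_mul_ncard_edgeSet_le_of_rainbowFree {V : Type*} [Fintype V] {H : SimpleGraph V}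
    (hT : ¬ ContainsCopy H (⊤ : SimpleGraph (Fin 3)))
    (hK : ¬ ContainsCopy H (completeBipartiteGraph (Fin 2) (Fin 3)))
    (hH : RainbowFree H (pathGraph 5)) :
    2 * H.edgeSet.ncard ≤ 3 * Fintype.card V := by
  classical
  obtain ⟨c, hproper, hrainbow⟩ := hH
  have hc : IsRainbowP4FreeColoring H c := ⟨hproper, hrainbow⟩
  rw [← coe_edgeFinset, Set.ncard_coe_finset]
  refine two_mul_card_edgeFinset_le (fun v _ ↦ hc.card_filter_three_le_degree_le hT hK v)
    fun u _ ↦ card_le_one.2 fun v hv w hw ↦ by_contra fun hvw ↦ ?_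
  simp only [mem_filter, mem_neighborFinset] at hv hw
  exact hc.false_of_adj_of_four_le_degree hT hK hv.1 hw.1 hvw hv.2 hw.2

/-- If `G` contains no `K_3` and no `K_{2,3}` as a subgraph, then
`2 · ex*(G, P_4) ≤ 3 · |V(G)|`. -/
theorem stmt16 {V : Type*} [Fintype V] (G : SimpleGraph V)
    (h3 : ¬ ContainsCopy G (⊤ : SimpleGraph (Fin 3)))
    (h23 : ¬ ContainsCopy G (completeBipartiteGraph (Fin 2) (Fin 3))) :
    2 * rainbowExtremalNumber G (SimpleGraph.pathGraph 5) ≤ 3 * Fintype.card V := by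
  have hbound : rainbowExtremalNumber G (pathGraph 5) ≤ 3 * Fintype.card V / 2 :=
    rainbowExtremalNumber_le fun H hle hH ↦ by
      have := two_mul_ncard_edgeSet_le_of_rainbowFree (fun h ↦ h3 (h.mono hle))
        (fun h ↦ h23 (h.mono hle)) hH
      omega
  omega
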